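/- Let M = (q : M → X) be an upper semicontinuous Banach bundle over a locally compact Hausdorff space X, (m_λ) a net in M and m ∈ M with q(m_λ) → q(m). Then m_λ → m if and only if for every ε > 0 there exists a convergent net (n_λ^ε) in M with q(n_λ^ε) = q(m_λ) such that eventually ‖m_λ − n_λ^ε‖ < ε and ‖m − lim_λ n_λ^ε‖ < ε. -/

import Mathlib

open Filter Topology

variable {X : Type*} [TopologicalSpace X] {E : X → Type*}
  [∀ x, NormedAddCommGroup (E x)] [∀ x, NormedSpace ℂ (E x)] [∀ x, CompleteSpace (E x)]
  [TopologicalSpace (Σ x, E x)]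

/-- An upper semicontinuous Banach bundle: the projection is a continuous open surjection,
the fibres are Banach spaces, the norm is upper semicontinuous, addition and scalar
multiplication are continuous, and the zero-section criterion holds. -/
structure IsUSCBanachBundle (E : X → Type*)
    [∀ x, NormedAddCommGroup (E x)] [∀ x, NormedSpace ℂ (E x)] [∀ x, CompleteSpace (E x)]
    [TopologicalSpace (Σ x, E x)] : Prop where
  cont_proj : Continuous (Sigma.fst : (Σ x, E x) → X)
  open_proj : IsOpenMap (Sigma.fst : (Σ x, E x) → X)
  usc_norm : UpperSemicontinuous (fun m : Σ x, E x => ‖m.2‖)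
  cont_add : Continuous (fun p : {q : (Σ x, E x) × (Σ x, E x) // q.1.1 = q.2.1} =>
    (⟨p.1.1.1, p.1.1.2 + cast (congrArg E p.2).symm p.1.2.2⟩ : Σ x, E x))
  cont_smul : Continuous (fun p : ℂ × (Σ x, E x) => (⟨p.2.1, p.1 • p.2.2⟩ : Σ x, E x))
  zero_criterion : ∀ (F : Filter (Σ x, E x)) (x : X),
    Tendsto (fun m : Σ x, E x => ‖m.2‖) F (𝓝 0) → Tendsto Sigma.fst F (𝓝 x) →
      F ≤ 𝓝 (⟨x, 0⟩ : Σ x, E x)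

/-! The forward direction takes `n = m`. Conversely, addition is continuous at `(M, 0)`, and by
the zero-section criterion small vectors over points near `M.1` are near `0`; hence a point
within `ε` of a point near `M` in the same fibre is itself near `M`. Applied once this puts `L`
near `M`, applied again it puts `m i` near `M` because `n i` is near `L`. -/

namespace IsUSCBanachBundle

def fiberAdd (a b : Σ x, E x) (h : a.1 = b.1) : Σ x, E x :=
  ⟨a.1, a.2 + cast (congrArg E h).symm b.2⟩

omit [TopologicalSpace X] [∀ x, NormedSpace ℂ (E x)] [∀ x, CompleteSpace (E x)]
  [TopologicalSpace (Σ x, E x)] in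
theorem fiberAdd_sub {a b : Σ x, E x} (h : a.1 = b.1) :
    fiberAdd a ⟨b.1, b.2 - cast (congrArg E h) a.2⟩ h = b := by
  obtain ⟨x, u⟩ := a
  obtain ⟨y, v⟩ := b
  dsimp only at h
  subst h
  simp [fiberAdd]

omit [TopologicalSpace X] [∀ x, NormedSpace ℂ (E x)] [∀ x, CompleteSpace (E x)]
  [TopologicalSpace (Σ x, E x)] in
theorem norm_sub_cast_comm {x y : X} (h : x = y) (u : E x) (v : E y) :
    ‖v - cast (congrArg E h) u‖ = ‖u - cast (congrArg E h.symm) v‖ := by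
  subst h
  exact norm_sub_rev _ _

theorem exists_nhds_forall_fiberAdd_mem (hE : IsUSCBanachBundle E) {a b : Σ x, E x}
    (h : a.1 = b.1) {U : Set (Σ x, E x)} (hU : U ∈ 𝓝 (fiberAdd a b h)) :
    ∃ A ∈ 𝓝 a, ∃ B ∈ 𝓝 b, ∀ a' ∈ A, ∀ b' ∈ B, ∀ h' : a'.1 = b'.1, fiberAdd a' b' h' ∈ U := by
  have hpre := hE.cont_add.continuousAt
    (x := (⟨(a, b), h⟩ : {q : (Σ x, E x) × (Σ x, E x) // q.1.1 = q.2.1})) hU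
  rw [nhds_subtype_eq_comap, mem_map, mem_comap] at hpre
  obtain ⟨S, hS, hSU⟩ := hpre
  obtain ⟨A, hA, B, hB, hAB⟩ := mem_nhds_prod_iff.mp hS
  exact ⟨A, hA, B, hB, fun a' ha' b' hb' h' =>
    hSU (a := ⟨(a', b'), h'⟩) (hAB (Set.mk_mem_prod ha' hb'))⟩

theorem exists_nhds_forall_norm_lt_mem (hE : IsUSCBanachBundle E) (x : X)
    {W : Set (Σ x, E x)} (hW : W ∈ 𝓝 (⟨x, 0⟩ : Σ x, E x)) :
    ∃ V ∈ 𝓝 x, ∃ ε > (0 : ℝ), ∀ w : Σ x, E x, w.1 ∈ V → ‖w.2‖ < ε → w ∈ W := by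
  have hle : comap Sigma.fst (𝓝 x) ⊓ comap (fun w : Σ x, E x => ‖w.2‖) (𝓝 0) ≤ 𝓝 ⟨x, 0⟩ :=
    hE.zero_criterion _ x (tendsto_comap.mono_left inf_le_right)
      (tendsto_comap.mono_left inf_le_left)
  obtain ⟨⟨V, ε⟩, ⟨hV, hε⟩, hVε⟩ :=
    ((𝓝 x).basis_sets.comap _).inf (Metric.nhds_basis_ball.comap _) |>.mem_iff.mp (hle hW)
  refine ⟨V, hV, ε, hε, fun w hwV hwε => hVε ⟨hwV, ?_⟩⟩
  simpa [Real.dist_eq] using hwε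

theorem exists_nhds_forall_norm_sub_lt_mem (hE : IsUSCBanachBundle E) {a : Σ x, E x}
    {U : Set (Σ x, E x)} (hU : U ∈ 𝓝 a) :
    ∃ A ∈ 𝓝 a, ∃ ε > (0 : ℝ), ∀ a' ∈ A, ∀ (b : Σ x, E x) (h : a'.1 = b.1),
      ‖b.2 - cast (congrArg E h) a'.2‖ < ε → b ∈ U := by
  have ha : fiberAdd a ⟨a.1, 0⟩ rfl = a := by simp [fiberAdd]
  obtain ⟨A, hA, W, hW, hAW⟩ :=
    hE.exists_nhds_forall_fiberAdd_mem (a := a) (b := ⟨a.1, 0⟩) rfl (ha ▸ hU)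
  obtain ⟨V, hV, ε, hε, hVW⟩ := hE.exists_nhds_forall_norm_lt_mem a.1 hW
  refine ⟨A ∩ Sigma.fst ⁻¹' V, inter_mem hA (hE.cont_proj.continuousAt hV), ε, hε,
    fun a' ha' b h hab => ?_⟩
  rw [← fiberAdd_sub h]
  exact hAW a' ha'.1 _ (hVW ⟨b.1, _⟩ (h ▸ ha'.2) hab) h

end IsUSCBanachBundle

theorem tendsto_iff_forall_eps_exists_close_tendsto_general
    (hE : IsUSCBanachBundle E)
    {ι : Type*} [Preorder ι]
    (m : ι → Σ x, E x) (M : Σ x, E x) :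
    Tendsto m atTop (𝓝 M) ↔
      ∀ ε > (0 : ℝ), ∃ (n : ι → Σ x, E x) (L : Σ x, E x),
        Tendsto n atTop (𝓝 L) ∧
        ∃ hfib : ∀ i, (n i).1 = (m i).1, ∃ hL : L.1 = M.1,
          (∀ᶠ i in atTop, ‖(m i).2 - cast (congrArg E (hfib i)) (n i).2‖ < ε) ∧
          ‖M.2 - cast (congrArg E hL) L.2‖ < ε := by
  refine ⟨fun h ε hε => ⟨m, M, h, fun _ => rfl, rfl, .of_forall fun _ => by simpa, by simpa⟩,
    fun h U hU => ?_⟩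
  obtain ⟨U₁, hU₁, ε₁, hε₁, hU₁U⟩ := hE.exists_nhds_forall_norm_sub_lt_mem hU
  obtain ⟨U₂, hU₂, ε₂, hε₂, hU₂U₁⟩ :=
    hE.exists_nhds_forall_norm_sub_lt_mem (interior_mem_nhds.mpr hU₁)
  obtain ⟨n, L, hnL, hfib, hL, hmn, hML⟩ := h (min ε₁ ε₂) (lt_min hε₁ hε₂)
  have hLU₁ : L ∈ interior U₁ := hU₂U₁ M (mem_of_mem_nhds hU₂) L hL.symm <| by
    rw [IsUSCBanachBundle.norm_sub_cast_comm hL.symm]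
    exact hML.trans_le (min_le_right _ _)
  show ∀ᶠ i in atTop, m i ∈ U
  filter_upwards [hnL (mem_interior_iff_mem_nhds.mp hLU₁), hmn] with i hn hclose
  exact hU₁U (n i) hn (m i) (hfib i) (hclose.trans_le (min_le_left _ _))

/-- **Lemma B.1** (`lem:convergence uscBb:close nets`): being arbitrarily close to convergent
nets over the same base points implies convergence. -/
theorem tendsto_iff_forall_eps_exists_close_tendsto
    [LocallyCompactSpace X] [T2Space X]
    (hE : IsUSCBanachBundle E)
    {ι : Type*} [Nonempty ι] [Preorder ι] [IsDirected ι (· ≤ ·)]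
    (m : ι → Σ x, E x) (M : Σ x, E x)
    (hproj : Tendsto (fun i => (m i).1) atTop (𝓝 M.1)) :
    Tendsto m atTop (𝓝 M) ↔
      ∀ ε > (0 : ℝ), ∃ (n : ι → Σ x, E x) (L : Σ x, E x),
        Tendsto n atTop (𝓝 L) ∧
        ∃ hfib : ∀ i, (n i).1 = (m i).1, ∃ hL : L.1 = M.1,
          (∀ᶠ i in atTop, ‖(m i).2 - cast (congrArg E (hfib i)) (n i).2‖ < ε) ∧
          ‖M.2 - cast (congrArg E hL) L.2‖ < ε :=
  tendsto_iff_forall_eps_exists_close_tendsto_general hE m M
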